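/- If the LMI of Theorem 1 is feasible with symmetric positive definite X_P, matrix W_P and γ > 0, then the closed-loop matrix A_cl = Ā + B̄₁·(W_P X_P⁻¹) is Hurwitz. -/

import Mathlib

open Matrix

/-- Negative definiteness of a real matrix via its quadratic form. -/
def NegDefQF {ι : Type*} [Fintype ι] (M : Matrix ι ι ℝ) : Prop :=
  ∀ x : ι → ℝ, x ≠ 0 → x ⬝ᵥ M.mulVec x < 0

/-- Real part of the complex quadratic form of a real matrix. -/
lemma re_quad_aux {n : ℕ} (M : Matrix (Fin n) (Fin n) ℝ) (v : Fin n → ℂ) :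
    (star v ⬝ᵥ (M.map (algebraMap ℝ ℂ)).mulVec v).re =
      (fun i => (v i).re) ⬝ᵥ M.mulVec (fun i => (v i).re) +
      (fun i => (v i).im) ⬝ᵥ M.mulVec (fun i => (v i).im) := by
  simp only [dotProduct, mulVec, Matrix.map_apply, Pi.star_apply, Finset.mul_sum,
    ← Finset.sum_add_distrib, Complex.re_sum]
  refine Finset.sum_congr rfl fun i _ => Finset.sum_congr rfl fun j _ => ?_
  have hcoe : ∀ r : ℝ, algebraMap ℝ ℂ r = (r : ℂ) := fun r => rfl
  simp only [Complex.mul_re, Complex.mul_im, Complex.star_def, Complex.conj_re,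
    Complex.conj_im, hcoe, Complex.ofReal_re, Complex.ofReal_im]
  ring

lemma negdef_complex {n : ℕ} {M : Matrix (Fin n) (Fin n) ℝ} (h : NegDefQF M) :
    ∀ v : Fin n → ℂ, v ≠ 0 → (star v ⬝ᵥ (M.map (algebraMap ℝ ℂ)).mulVec v).re < 0 := by
  intro v hv
  have key : ∀ x : Fin n → ℝ, x ⬝ᵥ M.mulVec x ≤ 0 := by
    intro x
    by_cases hx : x = 0
    · simp [hx]
    · exact (h x hx).le
  rw [re_quad_aux]
  set a : Fin n → ℝ := fun i => (v i).re with ha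
  set b : Fin n → ℝ := fun i => (v i).im with hb
  have hab : a ≠ 0 ∨ b ≠ 0 := by
    by_contra hc
    push_neg at hc
    apply hv
    funext i
    have h1 : a i = 0 := by rw [hc.1]; rfl
    have h2 : b i = 0 := by rw [hc.2]; rfl
    exact Complex.ext h1 h2
  rcases hab with hab | hab
  · have := h a hab
    have := key b
    linarith
  · have := h b hab
    have := key a
    linarith

lemma posdef_complex {n : ℕ} {X : Matrix (Fin n) (Fin n) ℝ} (hX : X.PosDef) :
    ∀ v : Fin n → ℂ, v ≠ 0 → 0 < (star v ⬝ᵥ (X.map (algebraMap ℝ ℂ)).mulVec v).re := by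
  intro v hv
  have key : ∀ x : Fin n → ℝ, 0 ≤ x ⬝ᵥ X.mulVec x := by
    intro x
    by_cases hx : x = 0
    · simp [hx]
    · simpa using ((Matrix.posDef_iff_dotProduct_mulVec.mp hX).2 hx).le
  rw [re_quad_aux]
  set a : Fin n → ℝ := fun i => (v i).re with ha
  set b : Fin n → ℝ := fun i => (v i).im with hb
  have hab : a ≠ 0 ∨ b ≠ 0 := by
    by_contra hc
    push_neg at hc
    apply hv
    funext i
    have h1 : a i = 0 := by rw [hc.1]; rfl
    have h2 : b i = 0 := by rw [hc.2]; rfl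
    exact Complex.ext h1 h2
  rcases hab with hab | hab
  · have : 0 < a ⬝ᵥ X.mulVec a := by simpa using (Matrix.posDef_iff_dotProduct_mulVec.mp hX).2 hab
    have := key b
    linarith
  · have : 0 < b ⬝ᵥ X.mulVec b := by simpa using (Matrix.posDef_iff_dotProduct_mulVec.mp hX).2 hab
    have := key a
    linarith

/-- Feasibility of the H∞ LMI of Theorem 1 implies that the closed-loop matrix
`A_cl = Ā + B̄₁ (W_P X_P⁻¹)` is Hurwitz: all its complex eigenvalues have
negative real part. -/
theorem lmi_feasible_implies_hurwitz {n m p q : ℕ}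
    (Abar : Matrix (Fin n) (Fin n) ℝ) (B1bar : Matrix (Fin n) (Fin m) ℝ)
    (B2bar : Matrix (Fin n) (Fin p) ℝ) (Cbar : Matrix (Fin q) (Fin n) ℝ)
    (D1bar : Matrix (Fin q) (Fin m) ℝ)
    (X_P : Matrix (Fin n) (Fin n) ℝ) (W_P : Matrix (Fin m) (Fin n) ℝ)
    (γ : ℝ) (hγ : 0 < γ) (hX : X_P.PosDef)
    (hLMI : NegDefQF (fromBlocks
        ((Abar * X_P + B1bar * W_P)ᵀ + Abar * X_P + B1bar * W_P)
        (fromCols B2bar ((Cbar * X_P + D1bar * W_P)ᵀ))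
        (fromRows B2barᵀ (Cbar * X_P + D1bar * W_P))
        (fromBlocks (-γ • (1 : Matrix (Fin p) (Fin p) ℝ)) 0 0
          (-γ • (1 : Matrix (Fin q) (Fin q) ℝ))))) :
    ∀ μ : ℂ,
      μ ∈ spectrum ℂ ((Abar + B1bar * (W_P * X_P⁻¹)).map (algebraMap ℝ ℂ)) →
      μ.re < 0 := by
  intro μ hμ
  set A : Matrix (Fin n) (Fin n) ℝ := Abar + B1bar * (W_P * X_P⁻¹) with hA
  -- X_P is invertible
  have hXinv : IsUnit X_P.det := isUnit_iff_ne_zero.mpr (ne_of_gt hX.det_pos)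
  have hAX : A * X_P = Abar * X_P + B1bar * W_P := by
    rw [hA, add_mul, Matrix.mul_assoc B1bar (W_P * X_P⁻¹) X_P,
      Matrix.mul_assoc W_P X_P⁻¹ X_P, Matrix.nonsing_inv_mul X_P hXinv, Matrix.mul_one]
  have hXsymm : X_Pᵀ = X_P := by
    have := hX.1
    rwa [Matrix.IsHermitian, Matrix.conjTranspose_eq_transpose_of_trivial] at this
  -- the Lyapunov matrix
  set M : Matrix (Fin n) (Fin n) ℝ := X_P * Aᵀ + A * X_P with hM
  have hMeq : M = (Abar * X_P + B1bar * W_P)ᵀ + Abar * X_P + B1bar * W_P := by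
    rw [hM, ← hAX]
    have : X_P * Aᵀ = (A * X_P)ᵀ := by rw [Matrix.transpose_mul, hXsymm]
    rw [this, add_assoc, hAX]
  -- M is negative definite
  have hMneg : NegDefQF M := by
    intro x hx
    have hx' : (Sum.elim x 0 : Fin n ⊕ (Fin p ⊕ Fin q) → ℝ) ≠ 0 := by
      intro hc
      apply hx
      funext i
      have := congrFun hc (Sum.inl i)
      simpa using this
    have := hLMI (Sum.elim x 0) hx'
    rw [Matrix.fromBlocks_mulVec] at this
    simp only [Matrix.mulVec_zero, add_zero, sumElim_dotProduct_sumElim,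
      zero_dotProduct, dotProduct_zero] at this
    rw [hMeq]
    simpa using this
  -- complexify
  set Ac : Matrix (Fin n) (Fin n) ℂ := A.map (algebraMap ℝ ℂ) with hAc
  -- star μ is in the spectrum of star Ac
  have hstar : (starRingEnd ℂ μ) ∈ spectrum ℂ (star Ac) := by
    rw [spectrum.mem_iff] at hμ ⊢
    intro hc
    apply hμ
    have : star (algebraMap ℂ (Matrix (Fin n) (Fin n) ℂ) (starRingEnd ℂ μ) - star Ac)
        = algebraMap ℂ (Matrix (Fin n) (Fin n) ℂ) μ - Ac := by
      rw [star_sub, star_star]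
      congr 1
      rw [Algebra.algebraMap_eq_smul_one, Algebra.algebraMap_eq_smul_one, star_smul, star_one]
      simp
    rw [← this]
    exact hc.star
  -- star Ac is the complexification of Aᵀ
  have hstarAc : star Ac = Aᵀ.map (algebraMap ℝ ℂ) := by
    ext i j
    simp [hAc, Matrix.star_apply, Matrix.conjTranspose_apply]
  -- extract an eigenvector
  have hev : Module.End.HasEigenvalue (Matrix.toLinAlgEquiv' (star Ac)) (starRingEnd ℂ μ) := by
    rw [Module.End.hasEigenvalue_iff_mem_spectrum]
    rwa [AlgEquiv.spectrum_eq Matrix.toLinAlgEquiv' (star Ac)]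
  obtain ⟨v, hv1, hv0⟩ := hev.exists_hasEigenvector
  have heig : (star Ac).mulVec v = (starRingEnd ℂ μ) • v := by
    have h := hv1
    rw [Module.End.mem_eigenspace_iff] at h
    rw [← h]
    simp [Matrix.toLinAlgEquiv', LinearMap.toMatrixAlgEquiv', Matrix.toLin'_apply]
  -- the quadratic forms
  set Xc : Matrix (Fin n) (Fin n) ℂ := X_P.map (algebraMap ℝ ℂ) with hXc
  set qX : ℂ := star v ⬝ᵥ Xc.mulVec v with hqX
  have hqXpos : 0 < qX.re := posdef_complex hX v hv0
  -- qX is real (X_P is Hermitian)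
  have hXcH : Xcᴴ = Xc := by
    ext i j
    simp only [hXc, Matrix.conjTranspose_apply, Matrix.map_apply]
    have : X_P j i = X_P i j := congrFun (congrFun hXsymm i) j
    rw [this]
    simp
  have hqXreal : (starRingEnd ℂ) qX = qX := by
    rw [hqX]
    calc (starRingEnd ℂ) (star v ⬝ᵥ Xc.mulVec v)
        = star (Xc.mulVec v) ⬝ᵥ v := by
          rw [Matrix.star_dotProduct]; simp
      _ = (star v ᵥ* Xcᴴ) ⬝ᵥ v := by rw [Matrix.star_mulVec]
      _ = star v ⬝ᵥ Xcᴴ.mulVec v := by rw [Matrix.dotProduct_mulVec]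
      _ = star v ⬝ᵥ Xc.mulVec v := by rw [hXcH]
  have hqXim : qX.im = 0 := by
    have := congrArg Complex.im hqXreal
    simp only [Complex.conj_im] at this
    linarith
  -- decompose the quadratic form of M
  set Mc : Matrix (Fin n) (Fin n) ℂ := M.map (algebraMap ℝ ℂ) with hMc
  have hMcEq : Mc = Xc * (star Ac) + (star Ac)ᴴ * Xc := by
    have h1 : (star Ac)ᴴ = Ac := by
      rw [Matrix.star_eq_conjTranspose, Matrix.conjTranspose_conjTranspose]
    rw [hMc, hM, Matrix.map_add, h1, hstarAc, hAc, hXc]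
    rw [Matrix.map_mul, Matrix.map_mul]
    exact fun a₁ a₂ => map_add (algebraMap ℝ ℂ) a₁ a₂
  have hterm1 : star v ⬝ᵥ (Xc * (star Ac)).mulVec v = (starRingEnd ℂ μ) * qX := by
    rw [← Matrix.mulVec_mulVec, heig, Matrix.mulVec_smul, dotProduct_smul, hqX,
      smul_eq_mul]
  have key : ∀ B : Matrix (Fin n) (Fin n) ℂ,
      (starRingEnd ℂ) (star v ⬝ᵥ B.mulVec v) = star v ⬝ᵥ Bᴴ.mulVec v := by
    intro B
    calc (starRingEnd ℂ) (star v ⬝ᵥ B.mulVec v)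
        = star (B.mulVec v) ⬝ᵥ v := by rw [Matrix.star_dotProduct]; simp
      _ = (star v ᵥ* Bᴴ) ⬝ᵥ v := by rw [Matrix.star_mulVec]
      _ = star v ⬝ᵥ Bᴴ.mulVec v := by rw [Matrix.dotProduct_mulVec]
  have hterm2' : star v ⬝ᵥ ((star Ac)ᴴ * Xc).mulVec v
      = (starRingEnd ℂ) ((starRingEnd ℂ μ) * qX) := by
    rw [← hterm1, key (Xc * star Ac), Matrix.conjTranspose_mul, hXcH]
  have hquad : star v ⬝ᵥ Mc.mulVec v
      = (starRingEnd ℂ μ) * qX + (starRingEnd ℂ) ((starRingEnd ℂ μ) * qX) := by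
    rw [hMcEq, Matrix.add_mulVec, dotProduct_add, hterm1, hterm2']
  have hre : (star v ⬝ᵥ Mc.mulVec v).re = 2 * (μ.re * qX.re) := by
    rw [hquad]
    simp only [Complex.add_re, Complex.conj_re, Complex.mul_re, Complex.conj_im, hqXim]
    ring
  have hlt : (star v ⬝ᵥ Mc.mulVec v).re < 0 := negdef_complex hMneg v hv0
  rw [hre] at hlt
  nlinarith
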